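/- (Key decomposition inequality) Let Q be the transition matrix of an irreducible aperiodic Markov chain on a finite set 𝒮 with unique invariant distribution π. Then for every state i, every time t ≥ 0 and all integers 0 ≤ M ≤ L: ‖p_{i,·}(t) − π‖ ≤ P{N(t) < M} + ‖q^{(M)}_{i,·} − π‖ + ‖q^{(L)}_{i,·} − π‖ · P{N(t) > L}. -/

import Mathlib

open MeasureTheory ProbabilityTheory Filter Finset

/-- Total variation distance between two (probability) vectors on a finite set. -/
noncomputable def tvDist {𝒮 : Type*} [Fintype 𝒮] (f g : 𝒮 → ℝ) : ℝ :=
  (1 / 2) * ∑ x, |f x - g x|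

open Matrix Topology

/-!
`p_{i,·}(t)` is the mixture `∑ₙ P{N(t) = n} q^{(n)}_{i,·}`, so by convexity of the total variation
distance `‖p_{i,·}(t) − π‖ ≤ ∑ₙ P{N(t) = n} ‖q^{(n)}_{i,·} − π‖`. The terms with `n < M` are at
most `P{N(t) = n}`. Since `π` is stationary (being the limit of the rows of `Qⁿ`) and a stochastic
matrix contracts total variation, `n ↦ ‖q^{(n)}_{i,·} − π‖` is antitone, so the remaining terms
sum to at most `‖q^{(M)}_{i,·} − π‖`.
-/

section TotalVariation

variable {𝒮 : Type*} [Fintype 𝒮]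

lemma tvDist_nonneg (f g : 𝒮 → ℝ) : 0 ≤ tvDist f g := by
  unfold tvDist
  positivity

lemma tvDist_le_one {f g : 𝒮 → ℝ} (hf : f ∈ stdSimplex ℝ 𝒮) (hg : g ∈ stdSimplex ℝ 𝒮) :
    tvDist f g ≤ 1 := by
  have h : ∑ x, |f x - g x| ≤ ∑ x, (f x + g x) := sum_le_sum fun x _ =>
    (abs_sub _ _).trans_eq (by rw [abs_of_nonneg (hf.1 x), abs_of_nonneg (hg.1 x)])
  rw [sum_add_distrib, hf.2, hg.2] at h
  unfold tvDist
  linarith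

lemma tvDist_vecMul_le [DecidableEq 𝒮] {Q : Matrix 𝒮 𝒮 ℝ} (hQ : Q ∈ rowStochastic ℝ 𝒮)
    (f g : 𝒮 → ℝ) : tvDist (f ᵥ* Q) (g ᵥ* Q) ≤ tvDist f g := by
  have hcol : ∀ j, |(f ᵥ* Q) j - (g ᵥ* Q) j| ≤ ∑ k, |f k - g k| * Q k j := fun j => by
    simp only [vecMul, dotProduct, ← sum_sub_distrib, ← sub_mul]
    refine (abs_sum_le_sum_abs _ _).trans_eq (sum_congr rfl fun k _ => ?_)
    rw [abs_mul, abs_of_nonneg (nonneg_of_mem_rowStochastic hQ)]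
  have hrow : ∑ j, ∑ k, |f k - g k| * Q k j = ∑ k, |f k - g k| := by
    rw [sum_comm]
    simp only [← mul_sum, sum_row_of_mem_rowStochastic hQ, mul_one]
  exact mul_le_mul_of_nonneg_left ((sum_le_sum fun j _ => hcol j).trans_eq hrow) (by norm_num)

lemma tvDist_tsum_le {v : ℕ → 𝒮 → ℝ} {π : 𝒮 → ℝ} {a : ℕ → ℝ} {C : ℝ}
    (hv : ∀ n j, |v n j| ≤ C) (ha : HasSum a 1) (ha0 : ∀ n, 0 ≤ a n) :
    tvDist (fun j => ∑' n, v n j * a n) π ≤ ∑' n, a n * tvDist (v n) π := by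
  have habs : ∀ j, Summable fun n => |v n j - π j| * a n := fun j =>
    .of_nonneg_of_le (fun n => mul_nonneg (abs_nonneg _) (ha0 n))
      (fun n => mul_le_mul_of_nonneg_right ((abs_sub _ _).trans (by linarith [hv n j])) (ha0 n))
      (ha.summable.mul_left (C + |π j|))
  have hsub : ∀ j, (∑' n, v n j * a n) - π j = ∑' n, (v n j - π j) * a n := fun j => by
    have hs : Summable fun n => (v n j - π j) * a n :=
      .of_abs (by simpa only [abs_mul, abs_of_nonneg (ha0 _)] using habs j)
    have h := hs.hasSum.add (by simpa using ha.mul_left (π j))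
    simp only [← add_mul, sub_add_cancel] at h
    rw [h.tsum_eq, add_sub_cancel_right]
  have hcoord : ∀ j, |(∑' n, v n j * a n) - π j| ≤ ∑' n, |v n j - π j| * a n := fun j => by
    have h := norm_tsum_le_tsum_norm (f := fun n => (v n j - π j) * a n)
      (by simpa only [Real.norm_eq_abs, abs_mul, abs_of_nonneg (ha0 _)] using habs j)
    simpa only [hsub, Real.norm_eq_abs, abs_mul, abs_of_nonneg (ha0 _)] using h
  calc tvDist (fun j => ∑' n, v n j * a n) π
      ≤ 1 / 2 * ∑ j, ∑' n, |v n j - π j| * a n :=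
        mul_le_mul_of_nonneg_left (sum_le_sum fun j _ => hcoord j) (by norm_num)
    _ = ∑' n, a n * tvDist (v n) π := by
        rw [← Summable.tsum_finsetSum fun j _ => habs j, ← tsum_mul_left]
        simp only [tvDist, ← sum_mul]
        exact tsum_congr fun n => by ring

lemma tsum_mul_le_sum_range_add {a d : ℕ → ℝ} (ha : HasSum a 1) (ha0 : ∀ n, 0 ≤ a n)
    (hd0 : ∀ n, 0 ≤ d n) (hd1 : ∀ n, d n ≤ 1) (hd : Antitone d) (M : ℕ) :
    ∑' n, a n * d n ≤ ∑ n ∈ range M, a n + d M := by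
  have hhead : HasSum (fun n => if n < M then a n else 0) (∑ n ∈ range M, a n) := by
    have h : HasSum (fun n => if n < M then a n else 0)
        (∑ n ∈ range M, if n < M then a n else 0) :=
      hasSum_sum_of_ne_finset_zero fun n hn => if_neg (by simpa using hn)
    rwa [sum_congr rfl fun n hn => if_pos (mem_range.1 hn)] at h
  have hbound : HasSum (fun n => (if n < M then a n else 0) + d M * a n)
      (∑ n ∈ range M, a n + d M) := by
    simpa using hhead.add (ha.mul_left (d M))
  refine hasSum_le (fun n => ?_) (Summable.of_nonneg_of_le (fun n => mul_nonneg (ha0 n) (hd0 n))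
    (fun n => mul_le_of_le_one_right (ha0 n) (hd1 n)) ha.summable).hasSum hbound
  split_ifs with hn
  · nlinarith [hd1 n, hd0 M, ha0 n]
  · nlinarith [hd (not_lt.1 hn), ha0 n]

end TotalVariation

section StochasticMatrix

variable {𝒮 : Type*} [Fintype 𝒮] [DecidableEq 𝒮] {Q : Matrix 𝒮 𝒮 ℝ} {π : 𝒮 → ℝ}

lemma row_mem_stdSimplex_of_mem_rowStochastic (hQ : Q ∈ rowStochastic ℝ 𝒮) (i : 𝒮) :
    Q i ∈ stdSimplex ℝ 𝒮 :=
  ⟨fun _ => nonneg_of_mem_rowStochastic hQ, sum_row_of_mem_rowStochastic hQ i⟩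

lemma mem_stdSimplex_of_tendsto_pow_apply (hQ : Q ∈ rowStochastic ℝ 𝒮) {i : 𝒮}
    (hconv : ∀ j, Tendsto (fun n : ℕ => (Q ^ n) i j) atTop (𝓝 (π j))) :
    π ∈ stdSimplex ℝ 𝒮 :=
  (isClosed_stdSimplex ℝ 𝒮).mem_of_tendsto (tendsto_pi_nhds.2 hconv) <| .of_forall fun n =>
    row_mem_stdSimplex_of_mem_rowStochastic (Submonoid.pow_mem _ hQ n) i

lemma vecMul_eq_of_tendsto_pow_apply {i : 𝒮}
    (hconv : ∀ j, Tendsto (fun n : ℕ => (Q ^ n) i j) atTop (𝓝 (π j))) : π ᵥ* Q = π := by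
  have hrows : Tendsto (fun n : ℕ => (Q ^ n) i) atTop (𝓝 π) := tendsto_pi_nhds.2 hconv
  have hnext : Tendsto (fun n : ℕ => (Q ^ n) i ᵥ* Q) atTop (𝓝 (π ᵥ* Q)) :=
    ((continuous_id.matrix_vecMul continuous_const).tendsto π).comp hrows
  simp only [← mul_apply_eq_vecMul, ← pow_succ] at hnext
  exact tendsto_nhds_unique hnext (hrows.comp (tendsto_add_atTop_nat 1))

lemma antitone_tvDist_pow_apply (hQ : Q ∈ rowStochastic ℝ 𝒮) (hπ : π ᵥ* Q = π) (i : 𝒮) :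
    Antitone fun n => tvDist ((Q ^ n) i) π :=
  antitone_nat_of_succ_le fun n => by
    simpa only [pow_succ, mul_apply_eq_vecMul, hπ] using tvDist_vecMul_le hQ ((Q ^ n) i) π

end StochasticMatrix

section CountingProcess

variable {Ω : Type*} [MeasurableSpace Ω]

lemma Nat.sSup_setOf_eq_iSup_ite (P : ℕ → Prop) [DecidablePred P] :
    sSup {n | P n} = ⨆ n, if P n then n else 0 := by
  by_cases hP : BddAbove {n | P n}
  · have hf : BddAbove (Set.range fun n => if P n then n else 0) := by
      obtain ⟨b, hb⟩ := hP
      refine ⟨b, Set.forall_mem_range.2 fun n => ?_⟩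
      split_ifs with hn
      exacts [hb hn, b.zero_le]
    refine le_antisymm (csSup_le' fun n hn => le_ciSup_of_le hf n (by simp [hn.out]))
      (ciSup_le' fun n => ?_)
    split_ifs with hn
    exacts [le_csSup hP hn, zero_le _]
  · have hf : ¬BddAbove (Set.range fun n => if P n then n else 0) := fun ⟨b, hb⟩ =>
      hP ⟨b, fun n hn => by simpa [hn.out] using hb ⟨n, rfl⟩⟩
    rw [csSup_of_not_bddAbove hP, ciSup_of_not_bddAbove hf]

lemma measurable_sSup_setOf_le {S : ℕ → Ω → ℝ} (hS : ∀ n, Measurable (S n)) (t : ℝ) :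
    Measurable fun ω => sSup {n : ℕ | S n ω ≤ t} := by
  simp_rw [Nat.sSup_setOf_eq_iSup_ite]
  exact .iSup fun n => Measurable.ite (measurableSet_le (hS n) measurable_const)
    measurable_const measurable_const

variable {μ : Measure Ω} [IsProbabilityMeasure μ] {X : Ω → ℕ}

lemma hasSum_toReal_measure_setOf_eq (hX : Measurable X) :
    HasSum (fun n => (μ {ω | X ω = n}).toReal) 1 := by
  have hdisj : Pairwise (Function.onFun Disjoint fun n => {ω | X ω = n}) :=
    fun m n hmn => Set.disjoint_left.2 fun ω hm hn => hmn (hm.symm.trans hn)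
  have hunion : (⋃ n, {ω | X ω = n}) = Set.univ :=
    Set.eq_univ_of_forall fun ω => ⟨_, ⟨X ω, rfl⟩, rfl⟩
  have h : ∑' n, μ {ω | X ω = n} = 1 := by
    rw [← measure_iUnion hdisj fun n => hX (measurableSet_singleton n), hunion, measure_univ]
  have hs := ENNReal.hasSum_toReal (h ▸ ENNReal.one_ne_top)
  rwa [← ENNReal.tsum_toReal_eq fun n => measure_ne_top μ _, h, ENNReal.toReal_one] at hs

lemma toReal_measure_setOf_lt_eq_sum (hX : Measurable X) (M : ℕ) :
    (μ {ω | X ω < M}).toReal = ∑ n ∈ range M, (μ {ω | X ω = n}).toReal := by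
  have h := sum_measureReal_preimage_singleton (μ := μ) (range M) fun n _ =>
    hX (measurableSet_singleton n)
  simp only [measureReal_def, coe_range] at h
  exact h.symm

end CountingProcess

theorem tv_decomposition_inequality_general
    {𝒮 : Type*} [Fintype 𝒮] [DecidableEq 𝒮]
    (Q : Matrix 𝒮 𝒮 ℝ)
    (hQnonneg : ∀ i j, 0 ≤ Q i j)
    (hQrow : ∀ i, ∑ j, Q i j = 1)
    (π : 𝒮 → ℝ)
    (hconv : ∀ i j, Tendsto (fun n : ℕ => (Q ^ n) i j) atTop (nhds (π j)))
    {Ω : Type*} [MeasurableSpace Ω] (μ : Measure Ω) [IsProbabilityMeasure μ]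
    (T : ℕ → Ω → ℝ)
    (hTmeas : ∀ n, Measurable (T n))
    (Spart : ℕ → Ω → ℝ)
    (hSpart : ∀ n ω, Spart n ω = ∑ k ∈ Finset.range n, T k ω)
    (N : ℝ → Ω → ℕ)
    (hN : ∀ t ω, N t ω = sSup {n : ℕ | Spart n ω ≤ t})
    (p : 𝒮 → 𝒮 → ℝ → ℝ)
    (hp : ∀ i j t, p i j t = ∑' n : ℕ, (Q ^ n) i j * (μ {ω | N t ω = n}).toReal) :
    ∀ (i : 𝒮) (t : ℝ), 0 ≤ t → ∀ (M L : ℕ), M ≤ L →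
      tvDist (fun j => p i j t) π ≤
        (μ {ω | N t ω < M}).toReal
        + tvDist (fun j => (Q ^ M) i j) π
        + tvDist (fun j => (Q ^ L) i j) π * (μ {ω | L < N t ω}).toReal := by
  intro i t _ M L _
  have hQ : Q ∈ rowStochastic ℝ 𝒮 := mem_rowStochastic_iff_sum.2 ⟨hQnonneg, hQrow⟩
  have hπ : π ∈ stdSimplex ℝ 𝒮 := mem_stdSimplex_of_tendsto_pow_apply hQ (hconv i)
  have hrow : ∀ n, (Q ^ n) i ∈ stdSimplex ℝ 𝒮 := fun n =>
    row_mem_stdSimplex_of_mem_rowStochastic (Submonoid.pow_mem _ hQ n) i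
  have hbdd : ∀ n j, |(Q ^ n) i j| ≤ 1 := fun n j => by
    rw [abs_of_nonneg ((hrow n).1 j)]
    exact le_one_of_mem_rowStochastic (Submonoid.pow_mem _ hQ n)
  have hSmeas : ∀ n, Measurable (Spart n) := fun n => by
    simpa only [funext (hSpart n)] using measurable_sum _ fun k _ => hTmeas k
  have hNmeas : Measurable (N t) := by
    simpa only [funext (hN t)] using measurable_sSup_setOf_le hSmeas t
  have ha := hasSum_toReal_measure_setOf_eq (μ := μ) hNmeas
  calc tvDist (fun j => p i j t) π
      ≤ ∑' n, (μ {ω | N t ω = n}).toReal * tvDist ((Q ^ n) i) π := by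
        simp only [hp]
        exact tvDist_tsum_le hbdd ha fun _ => ENNReal.toReal_nonneg
    _ ≤ (μ {ω | N t ω < M}).toReal + tvDist ((Q ^ M) i) π := by
        rw [toReal_measure_setOf_lt_eq_sum hNmeas]
        exact tsum_mul_le_sum_range_add ha (fun _ => ENNReal.toReal_nonneg)
          (fun _ => tvDist_nonneg _ _) (fun n => tvDist_le_one (hrow n) hπ)
          (antitone_tvDist_pow_apply hQ (vecMul_eq_of_tendsto_pow_apply (hconv i)) i) M
    _ ≤ _ := le_add_of_nonneg_right (mul_nonneg (tvDist_nonneg _ _) ENNReal.toReal_nonneg)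

/-- key decomposition inequality: for every state `i`, every `t ≥ 0`
and all integers `0 ≤ M ≤ L`,
`‖p_{i,·}(t) − π‖ ≤ P{N(t) < M} + ‖q^{(M)}_{i,·} − π‖ + ‖q^{(L)}_{i,·} − π‖ · P{N(t) > L}`. -/
theorem tv_decomposition_inequality
    {𝒮 : Type*} [Fintype 𝒮] [DecidableEq 𝒮] [Nonempty 𝒮]
    (Q : Matrix 𝒮 𝒮 ℝ)
    (hQnonneg : ∀ i j, 0 ≤ Q i j)
    (hQrow : ∀ i, ∑ j, Q i j = 1)
    (π : 𝒮 → ℝ)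
    (hconv : ∀ i j, Tendsto (fun n : ℕ => (Q ^ n) i j) atTop (nhds (π j)))
    {Ω : Type*} [MeasurableSpace Ω] (μ : Measure Ω) [IsProbabilityMeasure μ]
    (T : ℕ → Ω → ℝ)
    (hTmeas : ∀ n, Measurable (T n))
    (hTpos : ∀ n, ∀ᵐ ω ∂μ, 0 < T n ω)
    (hTindep : iIndepFun T μ)
    (hTident : ∀ n, IdentDistrib (T n) (T 0) μ μ)
    (Spart : ℕ → Ω → ℝ)
    (hSpart : ∀ n ω, Spart n ω = ∑ k ∈ Finset.range n, T k ω)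
    (N : ℝ → Ω → ℕ)
    (hN : ∀ t ω, N t ω = sSup {n : ℕ | Spart n ω ≤ t})
    (p : 𝒮 → 𝒮 → ℝ → ℝ)
    (hp : ∀ i j t, p i j t = ∑' n : ℕ, (Q ^ n) i j * (μ {ω | N t ω = n}).toReal) :
    ∀ (i : 𝒮) (t : ℝ), 0 ≤ t → ∀ (M L : ℕ), M ≤ L →
      tvDist (fun j => p i j t) π ≤
        (μ {ω | N t ω < M}).toReal
        + tvDist (fun j => (Q ^ M) i j) π
        + tvDist (fun j => (Q ^ L) i j) π * (μ {ω | L < N t ω}).toReal :=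
  tv_decomposition_inequality_general Q hQnonneg hQrow π hconv μ T hTmeas Spart hSpart N hN p hp
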